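/- arXiv:1803.06070 — 2 statements merged into one kernel-verified Lean document; each statement's English description precedes it below -/
import Mathlib

section
/- The measure ρ on (0,∞)^p is absolutely continuous with respect to Lebesgue measure, with density f(w₁,…,w_p) = ∫_0^∞ w₀^{−p} ∏_{k=1}^p [ b_k^{a_k} (w_k/w₀)^{a_k−1} e^{−b_k w_k/w₀} / Γ(a_k) ] · w₀^{−1−σ} e^{−τ w₀} / Γ(1−σ) dw₀ for (w₁,…,w_p) ∈ (0,∞)^p. -/
/-! `ρ` is the image of `ρ₀ ⊗ ∏ₖ Gamma(aₖ, bₖ)` under the scaling `(w₀, β) ↦ w₀ • β`. For fixed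
`w₀ > 0` the substitution `w = w₀ β` turns the product density `g(β)` into `w₀^(-p) g(w / w₀)`,
so by Tonelli the image has density `w ↦ ∫ w₀^(-p) g(w / w₀) dρ₀(w₀)`, which vanishes off the
open orthant. On the orthant the integrand is a constant times `w₀^r e^(-c/w₀) e^(-τ w₀)` with
`c = ∑ₖ bₖ wₖ > 0`; it is integrable because `e^(-c/w₀) ≤ n! (w₀/c)^n` tames the singularity at
`0`, so this `ℝ≥0∞`-valued density is `ofReal` of the Bochner integral. -/

open MeasureTheory Real Filter

/-- The Lévy measure of a generalized gamma process: the measure on `(0,∞)` with density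
`w ↦ w^(-1-σ) * exp(-τ*w) / Γ(1-σ)` with respect to Lebesgue measure. -/
noncomputable def rho0 (σ τ : ℝ) : Measure ℝ :=
  ((volume : Measure ℝ).restrict (Set.Ioi 0)).withDensity
    (fun w => ENNReal.ofReal (w ^ (-1 - σ) * Real.exp (-τ * w) / Real.Gamma (1 - σ)))

/-- The Gamma(a,b) probability measure on `(0,∞)`, with density
`x ↦ b^a x^(a−1) e^(−b x) / Γ(a)` with respect to Lebesgue measure. -/
noncomputable def gammaM (a b : ℝ) : Measure ℝ :=
  ((volume : Measure ℝ).restrict (Set.Ioi 0)).withDensity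
    (fun x => ENNReal.ofReal (b ^ a * x ^ (a - 1) * Real.exp (-b * x) / Real.Gamma a))

/-- The multivariate Lévy measure `ρ` of the compound CRM with independent gamma scores:
the pushforward of `ρ₀ ⊗ Gamma(a₁,b₁) ⊗ ⋯ ⊗ Gamma(a_p,b_p)` under
`(w₀, β₁, …, β_p) ↦ (w₀β₁, …, w₀β_p)`. -/
noncomputable def rhoC (σ τ : ℝ) (p : ℕ) (a b : Fin p → ℝ) : Measure (Fin p → ℝ) :=
  Measure.map (fun x : ℝ × (Fin p → ℝ) => fun k => x.1 * x.2 k)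
    ((rho0 σ τ).prod (Measure.pi fun k => gammaM (a k) (b k)))


open Set Module
open scoped ENNReal Nat

namespace MeasureTheory

theorem lintegral_fin_nat_prod_eq_prod {n : ℕ} {E : Type*} [MeasurableSpace E]
    (μ : Fin n → Measure E) [∀ i, SigmaFinite (μ i)] {f : Fin n → E → ℝ≥0∞}
    (hf : ∀ i, Measurable (f i)) :
    ∫⁻ x, ∏ i, f i (x i) ∂Measure.pi μ = ∏ i, ∫⁻ y, f i y ∂μ i := by
  induction n with
  | zero => simp
  | succ n ih =>
    calc ∫⁻ x, ∏ i, f i (x i) ∂Measure.pi μ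
        = ∫⁻ x : E × (Fin n → E), f 0 x.1 * ∏ i : Fin n, f i.succ (x.2 i)
            ∂(μ 0).prod (Measure.pi fun i => μ i.succ) := by
          rw [← (measurePreserving_piFinSuccAbove μ 0).symm.lintegral_comp_emb
            (MeasurableEquiv.measurableEmbedding _)]
          simp_rw [MeasurableEquiv.piFinSuccAbove_symm_apply, Fin.insertNthEquiv,
            Fin.prod_univ_succ, Fin.insertNth_zero, Equiv.coe_fn_mk, Fin.cons_succ,
            Fin.zero_succAbove, cast_eq, Fin.cons_zero]
      _ = (∫⁻ y, f 0 y ∂μ 0) * ∏ i : Fin n, ∫⁻ y, f i.succ y ∂μ i.succ := by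
          have htail : Measurable fun x : Fin n → E => ∏ i : Fin n, f i.succ (x i) :=
            Finset.measurable_prod _ fun i _ => (hf i.succ).comp (measurable_pi_apply i)
          rw [← ih _ fun i => hf i.succ, ← lintegral_prod_mul (hf 0).aemeasurable
            htail.aemeasurable]
      _ = ∏ i, ∫⁻ y, f i y ∂μ i := (Fin.prod_univ_succ fun i => ∫⁻ y, f i y ∂μ i).symm

theorem lintegral_fintype_prod_eq_prod {ι : Type*} [Fintype ι] {E : Type*} [MeasurableSpace E]
    (μ : ι → Measure E) [∀ i, SigmaFinite (μ i)] {f : ι → E → ℝ≥0∞}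
    (hf : ∀ i, Measurable (f i)) :
    ∫⁻ x, ∏ i, f i (x i) ∂Measure.pi μ = ∏ i, ∫⁻ y, f i y ∂μ i := by
  let e := (Fintype.equivFin ι).symm
  rw [← (measurePreserving_piCongrLeft μ e).lintegral_comp_emb
    (MeasurableEquiv.measurableEmbedding _)]
  simp_rw [← e.prod_comp, MeasurableEquiv.coe_piCongrLeft, Equiv.piCongrLeft_apply_apply]
  exact lintegral_fin_nat_prod_eq_prod _ fun i => hf (e i)

namespace Measure

section Pi

variable {ι : Type*} [Fintype ι] {E : Type*} [MeasurableSpace E] {μ : ι → Measure E}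
  [∀ i, SigmaFinite (μ i)]

theorem pi_withDensity {f : ι → E → ℝ≥0∞} (hf : ∀ i, Measurable (f i))
    [∀ i, SigmaFinite ((μ i).withDensity (f i))] :
    Measure.pi (fun i => (μ i).withDensity (f i))
      = (Measure.pi μ).withDensity fun x => ∏ i, f i (x i) := by
  refine Measure.pi_eq fun s hs => ?_
  rw [withDensity_apply _ (MeasurableSet.univ_pi hs), restrict_pi_pi,
    lintegral_fintype_prod_eq_prod _ hf]
  exact Finset.prod_congr rfl fun i _ => (withDensity_apply _ (hs i)).symm

theorem pi_restrict_withDensity {s : ι → Set E} (hs : ∀ i, MeasurableSet (s i))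
    (f : (ι → E) → ℝ≥0∞) :
    (Measure.pi fun i => (μ i).restrict (s i)).withDensity f
      = (Measure.pi μ).withDensity ((univ.pi s).indicator f) := by
  rw [← restrict_pi_pi, withDensity_indicator (MeasurableSet.univ_pi hs)]

end Pi

section AddHaar

variable {E : Type*} [NormedAddCommGroup E] [NormedSpace ℝ E] [MeasurableSpace E] [BorelSpace E]
  [FiniteDimensional ℝ E] (μ : Measure E) [μ.IsAddHaarMeasure]

theorem lintegral_comp_smul (f : E → ℝ≥0∞) {r : ℝ} (hr : r ≠ 0) :
    ∫⁻ x, f (r • x) ∂μ = ENNReal.ofReal |(r ^ finrank ℝ E)⁻¹| * ∫⁻ x, f x ∂μ := by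
  have hemb : MeasurableEmbedding (r • · : E → E) :=
    (Homeomorph.smulOfNeZero r hr).measurableEmbedding
  rw [← hemb.lintegral_map, map_addHaar_smul μ hr, lintegral_smul_measure, smul_eq_mul]

theorem withDensity_preimage_smul {g : E → ℝ≥0∞} {t : ℝ} (ht : t ≠ 0) {s : Set E}
    (hs : MeasurableSet s) :
    μ.withDensity g ((t • ·) ⁻¹' s)
      = ∫⁻ w in s, ENNReal.ofReal |(t ^ finrank ℝ E)⁻¹| * g (t⁻¹ • w) ∂μ := by
  have hpre : MeasurableSet ((t • ·) ⁻¹' s) := measurable_const_smul t hs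
  calc μ.withDensity g ((t • ·) ⁻¹' s)
      = ∫⁻ x, s.indicator (fun w => g (t⁻¹ • w)) (t • x) ∂μ := by
        rw [withDensity_apply _ hpre, ← lintegral_indicator hpre]
        refine lintegral_congr fun x => ?_
        rw [← indicator_comp_right]
        simp only [Function.comp_def, inv_smul_smul₀ ht]
    _ = ∫⁻ w in s, ENNReal.ofReal |(t ^ finrank ℝ E)⁻¹| * g (t⁻¹ • w) ∂μ := by
        rw [lintegral_comp_smul μ _ ht, lintegral_indicator hs,
          lintegral_const_mul' _ _ ENNReal.ofReal_ne_top]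

theorem map_smul_prod_withDensity (ν : Measure ℝ) [SFinite ν] (hν : ∀ᵐ t ∂ν, t ≠ 0)
    {g : E → ℝ≥0∞} (hg : Measurable g) :
    (ν.prod (μ.withDensity g)).map (fun x => x.1 • x.2)
      = μ.withDensity fun w => ∫⁻ t, ENNReal.ofReal |(t ^ finrank ℝ E)⁻¹| * g (t⁻¹ • w) ∂ν := by
  have hsmul : Measurable fun x : ℝ × E => x.1 • x.2 := measurable_fst.smul measurable_snd
  ext s hs
  rw [map_apply hsmul hs, prod_apply (hsmul hs), withDensity_apply _ hs]
  calc ∫⁻ t, μ.withDensity g ((t • ·) ⁻¹' s) ∂ν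
      = ∫⁻ t, ∫⁻ w in s, ENNReal.ofReal |(t ^ finrank ℝ E)⁻¹| * g (t⁻¹ • w) ∂μ ∂ν :=
        lintegral_congr_ae (hν.mono fun t ht => withDensity_preimage_smul μ ht hs)
    _ = _ := lintegral_lintegral_swap (by fun_prop)

end AddHaar

end Measure

end MeasureTheory

theorem Real.exp_neg_le_factorial_div_pow {y : ℝ} (hy : 0 < y) (n : ℕ) :
    exp (-y) ≤ n ! / y ^ n := by
  rw [exp_neg, ← inv_div]
  exact inv_anti₀ (by positivity) (pow_div_factorial_le_exp _ hy.le n)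

theorem integrableOn_rpow_mul_exp_neg_div_mul_exp_neg_mul {r c d : ℝ} (hc : 0 < c) (hd : 0 < d) :
    IntegrableOn (fun x => x ^ r * exp (-(c / x)) * exp (-(d * x))) (Ioi 0) := by
  set n := ⌈-r⌉₊
  have hrn : -1 < r + n := by linarith [Nat.le_ceil (-r)]
  have hdom : IntegrableOn (fun x => n ! / c ^ n * (x ^ (r + n) * exp (-d * x ^ (1 : ℝ))))
      (Ioi 0) :=
    (integrableOn_rpow_mul_exp_neg_mul_rpow hrn one_pos hd).const_mul _
  refine hdom.mono' (by fun_prop)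
    ((ae_restrict_iff' measurableSet_Ioi).2 (ae_of_all _ fun x hx => ?_))
  have hx : 0 < x := hx
  rw [norm_of_nonneg (by positivity), rpow_one, neg_mul]
  calc x ^ r * exp (-(c / x)) * exp (-(d * x))
      ≤ x ^ r * (n ! / (c / x) ^ n) * exp (-(d * x)) := by
        gcongr; exact exp_neg_le_factorial_div_pow (by positivity) n
    _ = n ! / c ^ n * (x ^ (r + n) * exp (-(d * x))) := by
        rw [rpow_add hx, rpow_natCast, div_pow]; field_simp

theorem smul_mem_pi_Ioi_iff {ι : Type*} {t : ℝ} (ht : 0 < t) {w : ι → ℝ} :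
    t • w ∈ univ.pi (fun _ => Ioi (0 : ℝ)) ↔ w ∈ univ.pi (fun _ => Ioi (0 : ℝ)) := by
  simp only [mem_univ_pi, mem_Ioi, Pi.smul_apply, smul_eq_mul, mul_pos_iff_of_pos_left ht]

instance (σ τ : ℝ) : SigmaFinite (rho0 σ τ) := SigmaFinite.withDensity_ofReal _

theorem rho0_ae_ne_zero (σ τ : ℝ) : ∀ᵐ t ∂rho0 σ τ, t ≠ 0 :=
  (withDensity_absolutelyContinuous _ _).ae_le <|
    (ae_restrict_mem measurableSet_Ioi).mono fun _ ht => ne_of_gt ht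

section Integrand

variable (σ τ : ℝ) {p : ℕ} (a b w : Fin p → ℝ)

noncomputable def rhoCIntegrand (w₀ : ℝ) : ℝ :=
  w₀ ^ (-(p : ℝ)) *
    (∏ k, b k ^ a k * (w k / w₀) ^ (a k - 1) * exp (-b k * w k / w₀) / Gamma (a k)) *
    (w₀ ^ (-1 - σ) * exp (-τ * w₀) / Gamma (1 - σ))

theorem rhoCIntegrand_eq_mul_prod {t : ℝ} (ht : 0 < t) :
    rhoCIntegrand σ τ a b w t
      = t ^ (-1 - σ) * exp (-τ * t) / Gamma (1 - σ) * (|(t ^ p)⁻¹| *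
          ∏ k, b k ^ a k * (t⁻¹ * w k) ^ (a k - 1) * exp (-b k * (t⁻¹ * w k)) / Gamma (a k)) := by
  simp only [rhoCIntegrand, rpow_neg ht.le, rpow_natCast, abs_of_pos (inv_pos.2 (pow_pos ht p)),
    div_eq_inv_mul (w _) t, mul_div_assoc (-b _) (w _) t]
  ring

theorem rhoCIntegrand_eq_closedForm (hw : ∀ k, 0 < w k) {t : ℝ} (ht : 0 < t) :
    rhoCIntegrand σ τ a b w t
      = (∏ k, b k ^ a k * w k ^ (a k - 1) / Gamma (a k)) / Gamma (1 - σ) *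
        (t ^ (-(p : ℝ) + ∑ k, (1 - a k) + (-1 - σ)) * exp (-((∑ k, b k * w k) / t))
          * exp (-(τ * t))) := by
  have hfactor : ∀ k, b k ^ a k * (w k / t) ^ (a k - 1) * exp (-b k * w k / t) / Gamma (a k)
      = b k ^ a k * w k ^ (a k - 1) / Gamma (a k) * (t ^ (1 - a k) * exp (-(b k * w k / t))) := by
    intro k
    rw [div_rpow (hw k).le ht.le, show 1 - a k = -(a k - 1) by ring, rpow_neg ht.le,
      neg_mul, neg_div]
    ring
  rw [rhoCIntegrand, Finset.prod_congr rfl fun k _ => hfactor k, Finset.prod_mul_distrib,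
    Finset.prod_mul_distrib, ← rpow_sum_of_pos ht, ← exp_sum, Finset.sum_neg_distrib,
    ← Finset.sum_div, rpow_add ht, rpow_add ht, neg_mul τ]
  ring

theorem integrableOn_rhoCIntegrand (hp : 1 ≤ p) (hτ : 0 < τ) (hb : ∀ k, 0 < b k)
    (hw : ∀ k, 0 < w k) :
    IntegrableOn (rhoCIntegrand σ τ a b w) (Ioi 0) := by
  have : Nonempty (Fin p) := ⟨⟨0, hp⟩⟩
  have hc : 0 < ∑ k, b k * w k :=
    Finset.sum_pos (fun k _ => mul_pos (hb k) (hw k)) Finset.univ_nonempty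
  exact IntegrableOn.congr_fun
    ((integrableOn_rpow_mul_exp_neg_div_mul_exp_neg_mul hc hτ).const_mul _)
    (fun t ht => (rhoCIntegrand_eq_closedForm σ τ a b w hw ht).symm) measurableSet_Ioi

theorem setLIntegral_eq_ofReal_integral_rhoCIntegrand (hσ : σ < 1) (hτ : 0 < τ)
    (hp : 1 ≤ p) (ha : ∀ k, 0 < a k) (hb : ∀ k, 0 < b k) (hw : ∀ k, 0 < w k) :
    ∫⁻ t in Ioi 0, ENNReal.ofReal (t ^ (-1 - σ) * exp (-τ * t) / Gamma (1 - σ)) *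
        (ENNReal.ofReal |(t ^ p)⁻¹| * ∏ k, ENNReal.ofReal
          (b k ^ a k * (t⁻¹ * w k) ^ (a k - 1) * exp (-b k * (t⁻¹ * w k)) / Gamma (a k)))
      = ENNReal.ofReal (∫ t in Ioi 0, rhoCIntegrand σ τ a b w t) := by
  have hΓ : 0 < Gamma (1 - σ) := Gamma_pos_of_pos (by linarith)
  have hscore : ∀ t, 0 < t → ∀ k,
      0 ≤ b k ^ a k * (t⁻¹ * w k) ^ (a k - 1) * exp (-b k * (t⁻¹ * w k)) / Gamma (a k) := by
    intro t ht k
    have := Gamma_pos_of_pos (ha k)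
    have := hb k
    have := hw k
    positivity
  have hnonneg : ∀ t ∈ Ioi (0 : ℝ), 0 ≤ rhoCIntegrand σ τ a b w t := fun t ht => by
    have ht : 0 < t := ht
    rw [rhoCIntegrand_eq_mul_prod σ τ a b w ht]
    exact mul_nonneg (by positivity) (mul_nonneg (abs_nonneg _)
      (Finset.prod_nonneg fun k _ => hscore t ht k))
  rw [ofReal_integral_eq_lintegral_ofReal (integrableOn_rhoCIntegrand σ τ a b w hp hτ hb hw)
    ((ae_restrict_iff' measurableSet_Ioi).2 (ae_of_all _ hnonneg))]
  refine setLIntegral_congr_fun measurableSet_Ioi fun t ht => ?_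
  have ht : 0 < t := ht
  rw [rhoCIntegrand_eq_mul_prod σ τ a b w ht, ENNReal.ofReal_mul (by positivity),
    ENNReal.ofReal_mul (abs_nonneg _), ENNReal.ofReal_prod_of_nonneg fun k _ => hscore t ht k]

theorem lintegral_rho0_indicator_smul (hσ : σ < 1) (hτ : 0 < τ) (hp : 1 ≤ p)
    (ha : ∀ k, 0 < a k) (hb : ∀ k, 0 < b k) :
    ∫⁻ t, ENNReal.ofReal |(t ^ p)⁻¹| * (univ.pi fun _ => Ioi 0).indicator
        (fun x => ∏ k, ENNReal.ofReal
          (b k ^ a k * x k ^ (a k - 1) * exp (-b k * x k) / Gamma (a k))) (t⁻¹ • w) ∂rho0 σ τ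
      = (univ.pi fun _ => Ioi 0).indicator
          (fun w => ENNReal.ofReal (∫ t in Ioi 0, rhoCIntegrand σ τ a b w t)) w := by
  rw [rho0, lintegral_withDensity_eq_lintegral_mul_non_measurable _ (by fun_prop)
    (ae_of_all _ fun _ => ENNReal.ofReal_lt_top)]
  by_cases hw : w ∈ univ.pi fun _ => Ioi 0
  · rw [indicator_of_mem hw, ← setLIntegral_eq_ofReal_integral_rhoCIntegrand σ τ a b w
      hσ hτ hp ha hb fun k => hw k (mem_univ k)]
    refine setLIntegral_congr_fun measurableSet_Ioi fun t ht => ?_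
    rw [Pi.mul_apply, indicator_of_mem ((smul_mem_pi_Ioi_iff (inv_pos.2 ht)).2 hw)]
    simp only [Pi.smul_apply, smul_eq_mul]
  · rw [indicator_of_notMem hw]
    refine (setLIntegral_congr_fun measurableSet_Ioi fun t ht => ?_).trans lintegral_zero
    rw [Pi.mul_apply, indicator_of_notMem (mt (smul_mem_pi_Ioi_iff (inv_pos.2 ht)).1 hw),
      mul_zero, mul_zero]

end Integrand

/-- The multivariate Lévy measure `ρ` is absolutely continuous with respect to Lebesgue
measure on `(0,∞)^p`, with density
`f(w) = ∫_0^∞ w₀^(−p) ∏_k [b_k^(a_k) (w_k/w₀)^(a_k−1) e^(−b_k w_k/w₀) / Γ(a_k)]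
        · w₀^(−1−σ) e^(−τ w₀)/Γ(1−σ) dw₀`. -/
theorem rhoC_density (σ τ : ℝ) (hσ : σ < 1) (hτ : 0 < τ) (p : ℕ) (hp : 1 ≤ p)
    (a b : Fin p → ℝ) (ha : ∀ k, 0 < a k) (hb : ∀ k, 0 < b k) :
    rhoC σ τ p a b =
      (Measure.pi fun _ : Fin p => ((volume : Measure ℝ).restrict (Set.Ioi 0))).withDensity
        (fun w => ENNReal.ofReal (∫ w₀ in Set.Ioi (0:ℝ),
          w₀ ^ (-(p:ℝ)) *
            (∏ k, (b k) ^ (a k) * (w k / w₀) ^ (a k - 1) *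
              Real.exp (-(b k) * (w k) / w₀) / Real.Gamma (a k)) *
            (w₀ ^ (-1 - σ) * Real.exp (-τ * w₀) / Real.Gamma (1 - σ)))) := by
  have hIoi : ∀ _ : Fin p, MeasurableSet (Ioi (0 : ℝ)) := fun _ => measurableSet_Ioi
  have hgamma : ∀ k, Measurable fun x => ENNReal.ofReal
      (b k ^ a k * x ^ (a k - 1) * exp (-b k * x) / Gamma (a k)) := fun k => by fun_prop
  simp only [rhoC, gammaM]
  rw [Measure.pi_withDensity hgamma, Measure.pi_restrict_withDensity hIoi,
    Measure.pi_restrict_withDensity hIoi]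
  change Measure.map (fun x : ℝ × (Fin p → ℝ) => x.1 • x.2) _ = _
  have hscores : Measurable fun x : Fin p → ℝ => ∏ k, ENNReal.ofReal
      (b k ^ a k * x k ^ (a k - 1) * exp (-b k * x k) / Gamma (a k)) := by fun_prop
  rw [Measure.map_smul_prod_withDensity _ _ (rho0_ae_ne_zero σ τ)
    (hscores.indicator (MeasurableSet.univ_pi hIoi)), finrank_fin_fun]
  congr 1
  funext w
  exact lintegral_rho0_indicator_smul σ τ a b w hσ hτ hp ha hb
end

section
/- For every t = (t₁,…,t_p) with t_k ≥ 0 for all k, the Laplace exponent satisfies ψ(t₁,…,t_p) = ∫_0^∞ ( 1 − ∏_{k=1}^p (1 + t_k w₀ / b_k)^{−a_k} ) ρ₀(dw₀), and this quantity is finite. -/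
open MeasureTheory Real Filter

/-!
Given `w₀`, the coordinates `w₀ β_k` of `ρ` are driven by independent gamma scores, so by
Tonelli the integrand `1 - e^{-Σ t_k w₀ β_k}` averages to `1 - ∏_k E[e^{-t_k w₀ β_k}]`, and each
factor is the gamma Laplace transform `(1 + t_k w₀ / b_k)^{-a_k}`. For finiteness,
`1 - ∏ (1 + x_k)^{-a_k} ≤ -log ∏ (1 + x_k)^{-a_k} ≤ Σ a_k x_k` is linear in `w₀`, and `ρ₀` has
finite first moment `τ^{σ-1}` because `σ < 1`.
-/

open Set ProbabilityTheory
open scoped ENNReal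

lemma lintegral_Ioi_rpow_mul_exp_neg_mul {a r : ℝ} (ha : 0 < a) (hr : 0 < r) :
    ∫⁻ x in Ioi 0, ENNReal.ofReal (x ^ (a - 1) * exp (-(r * x))) =
      ENNReal.ofReal ((1 / r) ^ a * Gamma a) := by
  have h := integral_rpow_mul_exp_neg_mul_Ioi ha hr
  rw [← h, ofReal_integral_eq_lintegral_ofReal (.of_integral_ne_zero (by rw [h]; positivity))]
  filter_upwards [ae_restrict_mem measurableSet_Ioi] with x (hx : 0 < x)
  positivity

lemma lintegral_pi_prod_eq_prod {ι : Type*} [Fintype ι] {Ω : ι → Type*}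
    [∀ i, MeasurableSpace (Ω i)] {μ : ∀ i, Measure (Ω i)} [∀ i, IsProbabilityMeasure (μ i)]
    {f : ∀ i, Ω i → ℝ≥0∞} (hf : ∀ i, Measurable (f i)) :
    ∫⁻ x, ∏ i, f i (x i) ∂Measure.pi μ = ∏ i, ∫⁻ x, f i x ∂μ i := by
  refine (lintegral_prod_eq_prod_lintegral_of_indepFun Finset.univ
    (fun i (x : ∀ j, Ω j) => f i (x i)) (iIndepFun_pi fun i => (hf i).aemeasurable)
    fun i => (hf i).comp (measurable_pi_apply i)).trans
    (Finset.prod_congr rfl fun i _ => (measurePreserving_eval μ i).lintegral_comp (hf i))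

lemma lintegral_pi_one_sub_prod {ι : Type*} [Fintype ι] {Ω : ι → Type*}
    [∀ i, MeasurableSpace (Ω i)] {μ : ∀ i, Measure (Ω i)} [∀ i, IsProbabilityMeasure (μ i)]
    {f : ∀ i, Ω i → ℝ≥0∞} (hf : ∀ i, Measurable (f i)) (hf_le : ∀ i, ∀ᵐ x ∂μ i, f i x ≤ 1) :
    ∫⁻ x, 1 - ∏ i, f i (x i) ∂Measure.pi μ = 1 - ∏ i, ∫⁻ x, f i x ∂μ i := by
  have hprod_le : ∀ᵐ x ∂Measure.pi μ, ∏ i, f i (x i) ≤ 1 := by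
    filter_upwards [ae_all_iff.2 fun i => (Measure.quasiMeasurePreserving_eval μ i).ae (hf_le i)]
      with x hx
    exact Finset.prod_le_one' fun i _ => hx i
  have hmeas : Measurable fun x : ∀ i, Ω i => ∏ i, f i (x i) :=
    Finset.measurable_prod _ fun i _ => (hf i).comp (measurable_pi_apply i)
  rw [lintegral_sub hmeas (ne_top_of_le_ne_top (by simp) (lintegral_mono_ae hprod_le)) hprod_le,
    lintegral_one, measure_univ, lintegral_pi_prod_eq_prod hf]

lemma ae_pos_gammaM (a b : ℝ) : ∀ᵐ x ∂gammaM a b, 0 < x :=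
  (withDensity_absolutelyContinuous _ _).ae_le (ae_restrict_mem measurableSet_Ioi)

lemma ae_pos_rho0 (σ τ : ℝ) : ∀ᵐ w ∂rho0 σ τ, 0 < w :=
  (withDensity_absolutelyContinuous _ _).ae_le (ae_restrict_mem measurableSet_Ioi)

lemma lintegral_exp_neg_mul_gammaM {a b s : ℝ} (ha : 0 < a) (hb : 0 < b) (hs : -b < s) :
    ∫⁻ x, ENNReal.ofReal (exp (-(s * x))) ∂gammaM a b = ENNReal.ofReal ((1 + s / b) ^ (-a)) := by
  have hbs : 0 < b + s := by linarith
  have hΓ := Gamma_pos_of_pos ha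
  rw [gammaM, lintegral_withDensity_eq_lintegral_mul _ (by fun_prop) (by fun_prop)]
  calc ∫⁻ x in Ioi 0, ENNReal.ofReal (b ^ a * x ^ (a - 1) * exp (-b * x) / Gamma a) *
        ENNReal.ofReal (exp (-(s * x)))
      = ∫⁻ x in Ioi 0, ENNReal.ofReal (b ^ a / Gamma a) *
          ENNReal.ofReal (x ^ (a - 1) * exp (-((b + s) * x))) := by
        refine setLIntegral_congr_fun measurableSet_Ioi fun x (hx : 0 < x) => ?_
        rw [← ENNReal.ofReal_mul (by positivity), ← ENNReal.ofReal_mul (by positivity)]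
        congr 1
        rw [neg_mul, add_mul, neg_add, exp_add]
        ring
    _ = ENNReal.ofReal (b ^ a / Gamma a * ((1 / (b + s)) ^ a * Gamma a)) := by
        rw [lintegral_const_mul _ (by fun_prop), lintegral_Ioi_rpow_mul_exp_neg_mul ha hbs]
        exact (ENNReal.ofReal_mul (by positivity)).symm
    _ = ENNReal.ofReal ((1 + s / b) ^ (-a)) := by
        rw [show 1 + s / b = (b + s) / b by field_simp, rpow_neg (by positivity),
          div_rpow hbs.le hb.le, div_rpow zero_le_one hbs.le, one_rpow]
        field_simp

lemma isProbabilityMeasure_gammaM {a b : ℝ} (ha : 0 < a) (hb : 0 < b) :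
    IsProbabilityMeasure (gammaM a b) :=
  ⟨by simpa using lintegral_exp_neg_mul_gammaM ha hb (s := 0) (by linarith)⟩

lemma lintegral_ofReal_rho0 {σ τ : ℝ} (hσ : σ < 1) (hτ : 0 < τ) :
    ∫⁻ w, ENNReal.ofReal w ∂rho0 σ τ = ENNReal.ofReal (τ ^ (σ - 1)) := by
  have hσ' : 0 < 1 - σ := by linarith
  have hΓ := Gamma_pos_of_pos hσ'
  rw [rho0, lintegral_withDensity_eq_lintegral_mul _ (by fun_prop) (by fun_prop)]
  calc ∫⁻ w in Ioi 0, ENNReal.ofReal (w ^ (-1 - σ) * exp (-τ * w) / Gamma (1 - σ)) *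
        ENNReal.ofReal w
      = ∫⁻ w in Ioi 0, ENNReal.ofReal (Gamma (1 - σ))⁻¹ *
          ENNReal.ofReal (w ^ ((1 - σ) - 1) * exp (-(τ * w))) := by
        refine setLIntegral_congr_fun measurableSet_Ioi fun w (hw : 0 < w) => ?_
        rw [← ENNReal.ofReal_mul (by positivity), ← ENNReal.ofReal_mul (by positivity)]
        congr 1
        rw [sub_sub_cancel_left, show -σ = -1 - σ + 1 by ring, rpow_add_one hw.ne', neg_mul]
        ring
    _ = ENNReal.ofReal ((Gamma (1 - σ))⁻¹ * ((1 / τ) ^ (1 - σ) * Gamma (1 - σ))) := by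
        rw [lintegral_const_mul _ (by fun_prop), lintegral_Ioi_rpow_mul_exp_neg_mul hσ' hτ]
        exact (ENNReal.ofReal_mul (by positivity)).symm
    _ = ENNReal.ofReal (τ ^ (σ - 1)) := by
        rw [one_div, inv_rpow hτ.le, ← rpow_neg hτ.le, neg_sub]
        field_simp

lemma one_sub_prod_one_add_rpow_neg_le_sum {ι : Type*} [Fintype ι] {a x : ι → ℝ}
    (ha : ∀ i, 0 ≤ a i) (hx : ∀ i, 0 ≤ x i) :
    1 - ∏ i, (1 + x i) ^ (-a i) ≤ ∑ i, a i * x i := by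
  have hpos : ∀ i, 0 < 1 + x i := fun i => by linarith [hx i]
  have hprod : 0 < ∏ i, (1 + x i) ^ (-a i) :=
    Finset.prod_pos fun i _ => rpow_pos_of_pos (hpos i) _
  calc 1 - ∏ i, (1 + x i) ^ (-a i) ≤ -log (∏ i, (1 + x i) ^ (-a i)) := by
        linarith [log_le_sub_one_of_pos hprod]
    _ = ∑ i, a i * log (1 + x i) := by
        rw [log_prod fun i _ => (rpow_pos_of_pos (hpos i) _).ne', ← Finset.sum_neg_distrib]
        exact Finset.sum_congr rfl fun i _ => by rw [log_rpow (hpos i)]; ring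
    _ ≤ ∑ i, a i * x i := Finset.sum_le_sum fun i _ =>
        mul_le_mul_of_nonneg_left (by linarith [log_le_sub_one_of_pos (hpos i)]) (ha i)

lemma lintegral_one_sub_exp_neg_sum_pi_gammaM {ι : Type*} [Fintype ι] {a b c : ι → ℝ}
    (ha : ∀ i, 0 < a i) (hb : ∀ i, 0 < b i) (hc : ∀ i, 0 ≤ c i) :
    ∫⁻ β, ENNReal.ofReal (1 - exp (-∑ i, c i * β i)) ∂Measure.pi (fun i => gammaM (a i) (b i)) =
      ENNReal.ofReal (1 - ∏ i, (1 + c i / b i) ^ (-a i)) := by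
  have := fun i => isProbabilityMeasure_gammaM (ha i) (hb i)
  have hexp (β : ι → ℝ) : ENNReal.ofReal (1 - exp (-∑ i, c i * β i)) =
      1 - ∏ i, ENNReal.ofReal (exp (-(c i * β i))) := by
    rw [← Finset.sum_neg_distrib, exp_sum, ENNReal.ofReal_sub _ (by positivity),
      ENNReal.ofReal_one, ENNReal.ofReal_prod_of_nonneg fun i _ => (exp_pos _).le]
  have hle_one (i : ι) : ∀ᵐ x ∂gammaM (a i) (b i), ENNReal.ofReal (exp (-(c i * x))) ≤ 1 := by
    filter_upwards [ae_pos_gammaM (a i) (b i)] with x hx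
    exact ENNReal.ofReal_le_one.2 (exp_le_one_iff.2 (neg_nonpos.2 (mul_nonneg (hc i) hx.le)))
  have hbase (i : ι) : 0 ≤ 1 + c i / b i := by linarith [div_nonneg (hc i) (hb i).le]
  simp_rw [hexp]
  rw [lintegral_pi_one_sub_prod (fun i => by fun_prop) hle_one,
    Finset.prod_congr rfl fun i _ =>
      lintegral_exp_neg_mul_gammaM (ha i) (hb i) (by linarith [hb i, hc i]),
    ← ENNReal.ofReal_prod_of_nonneg fun i _ => rpow_nonneg (hbase i) _,
    ENNReal.ofReal_sub _ (Finset.prod_nonneg fun i _ => rpow_nonneg (hbase i) _),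
    ENNReal.ofReal_one]

lemma lintegral_rhoC_eq_lintegral_rho0 (σ τ : ℝ) {p : ℕ} {a b t : Fin p → ℝ}
    (ha : ∀ k, 0 < a k) (hb : ∀ k, 0 < b k) (ht : ∀ k, 0 ≤ t k) :
    ∫⁻ w, ENNReal.ofReal (1 - exp (-∑ k, t k * w k)) ∂rhoC σ τ p a b =
      ∫⁻ w₀, ENNReal.ofReal (1 - ∏ k, (1 + t k * w₀ / b k) ^ (-(a k))) ∂rho0 σ τ := by
  have := fun k => isProbabilityMeasure_gammaM (ha k) (hb k)
  rw [rhoC, lintegral_map (by fun_prop) (by fun_prop), lintegral_prod _ (by fun_prop)]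
  refine lintegral_congr_ae ?_
  filter_upwards [ae_pos_rho0 σ τ] with w₀ hw₀
  simp only [← mul_assoc]
  exact lintegral_one_sub_exp_neg_sum_pi_gammaM ha hb fun k => mul_nonneg (ht k) hw₀.le

lemma lintegral_one_sub_prod_rpow_neg_rho0_lt_top {σ τ : ℝ} (hσ : σ < 1) (hτ : 0 < τ)
    {ι : Type*} [Fintype ι] {a b t : ι → ℝ}
    (ha : ∀ k, 0 ≤ a k) (hb : ∀ k, 0 < b k) (ht : ∀ k, 0 ≤ t k) :
    ∫⁻ w₀, ENNReal.ofReal (1 - ∏ k, (1 + t k * w₀ / b k) ^ (-(a k))) ∂rho0 σ τ < ⊤ := by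
  set C := ∑ k, a k * t k / b k
  have hC : 0 ≤ C := Finset.sum_nonneg fun k _ => div_nonneg (mul_nonneg (ha k) (ht k)) (hb k).le
  calc ∫⁻ w₀, ENNReal.ofReal (1 - ∏ k, (1 + t k * w₀ / b k) ^ (-(a k))) ∂rho0 σ τ
      ≤ ∫⁻ w₀, ENNReal.ofReal C * ENNReal.ofReal w₀ ∂rho0 σ τ := by
        refine lintegral_mono_ae ?_
        filter_upwards [ae_pos_rho0 σ τ] with w₀ hw₀
        have hx (k : ι) : 0 ≤ t k * w₀ / b k := div_nonneg (mul_nonneg (ht k) hw₀.le) (hb k).le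
        rw [← ENNReal.ofReal_mul hC]
        refine ENNReal.ofReal_le_ofReal ((one_sub_prod_one_add_rpow_neg_le_sum ha hx).trans_eq ?_)
        rw [Finset.sum_mul]
        exact Finset.sum_congr rfl fun k _ => by ring
    _ = ENNReal.ofReal C * ENNReal.ofReal (τ ^ (σ - 1)) := by
        rw [lintegral_const_mul _ (by fun_prop), lintegral_ofReal_rho0 hσ hτ]
    _ < ⊤ := ENNReal.mul_lt_top ENNReal.ofReal_lt_top ENNReal.ofReal_lt_top

theorem laplace_exponent_CCRM_general (σ τ : ℝ) (hσ : σ < 1) (hτ : 0 < τ) (p : ℕ)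
    (a b : Fin p → ℝ) (ha : ∀ k, 0 < a k) (hb : ∀ k, 0 < b k)
    (t : Fin p → ℝ) (ht : ∀ k, 0 ≤ t k) :
    (∫⁻ w, ENNReal.ofReal (1 - Real.exp (-∑ k, t k * w k)) ∂(rhoC σ τ p a b)) =
      (∫⁻ w₀, ENNReal.ofReal (1 - ∏ k, (1 + t k * w₀ / b k) ^ (-(a k))) ∂(rho0 σ τ)) ∧
    (∫⁻ w, ENNReal.ofReal (1 - Real.exp (-∑ k, t k * w k)) ∂(rhoC σ τ p a b)) < ⊤ := by
  have hψ := lintegral_rhoC_eq_lintegral_rho0 σ τ ha hb ht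
  exact ⟨hψ, hψ ▸ lintegral_one_sub_prod_rpow_neg_rho0_lt_top hσ hτ (fun k => (ha k).le) hb ht⟩

/-- For every `t = (t₁,…,t_p)` with nonnegative coordinates, the Laplace exponent
`ψ(t) = ∫ (1 − e^{−Σ_k t_k w_k}) ρ(dw)` satisfies
`ψ(t) = ∫_0^∞ (1 − ∏_k (1 + t_k w₀/b_k)^{−a_k}) ρ₀(dw₀)` and is finite. -/
theorem laplace_exponent_CCRM (σ τ : ℝ) (hσ : σ < 1) (hτ : 0 < τ) (p : ℕ) (hp : 1 ≤ p)
    (a b : Fin p → ℝ) (ha : ∀ k, 0 < a k) (hb : ∀ k, 0 < b k)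
    (t : Fin p → ℝ) (ht : ∀ k, 0 ≤ t k) :
    (∫⁻ w, ENNReal.ofReal (1 - Real.exp (-∑ k, t k * w k)) ∂(rhoC σ τ p a b)) =
      (∫⁻ w₀, ENNReal.ofReal (1 - ∏ k, (1 + t k * w₀ / b k) ^ (-(a k))) ∂(rho0 σ τ)) ∧
    (∫⁻ w, ENNReal.ofReal (1 - Real.exp (-∑ k, t k * w k)) ∂(rhoC σ τ p a b)) < ⊤ :=
  laplace_exponent_CCRM_general σ τ hσ hτ p a b ha hb t ht
end
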